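/- arXiv:math/0304175 — 3 statements merged into one kernel-verified Lean document; each statement's English description precedes it below -/
import Mathlib

section
/- Let σ ∈ ℝ. For every continuous compactly supported function u : ℝ → ℂ, the limit lim_{t→1⁻} ∫_ℝ (π(a_t)v_K)(x) · conj(u(x)) dx exists and equals ∫_ℝ v_H(x) · conj(u(x)) dx; in particular the function x ↦ v_H(x)·conj(u(x)) is Lebesgue integrable on ℝ. -/
/-!
Dominated convergence as `t → 1⁻`. The base `1 + e^{iπt}x²` has modulus at least `|1 - x²|`, and
the exponent `s = -(1 - iσ)/2` has real part `-1/2`, so `|π(a_t)v_K(x)| ≤ C |1 - x²|^{-1/2}`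
uniformly in `t`; the right side is locally integrable, hence integrable against `u`.
Pointwise, for `|x| > 1` the base tends to the negative number `1 - x²` from the upper half-plane,
where `z^s → e^{iπs}(x² - 1)^s`; this phase turns `e^{iπ(1-iσ)/4}` into `e^{-iπ(1-iσ)/4}`.
The bound on `v_H` and its measurability then come from `v_H` being the pointwise limit.
-/

open MeasureTheory Filter Topology Complex

/-- The boundary-value function `v_H` of Example 2.1.5: principal complex powers of
positive reals, parameter `λ = iσ`. -/
noncomputable def vH (σ : ℝ) (x : ℝ) : ℂ :=
  if |x| < 1 then
    Complex.exp (Complex.I * Real.pi * (1 - Complex.I * σ) / 4) *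
      (Real.pi : ℂ) ^ (-(1 / 2 : ℂ)) * ((1 - x ^ 2 : ℝ) : ℂ) ^ (-(1 - Complex.I * σ) / 2)
  else if 1 < |x| then
    Complex.exp (-(Complex.I * Real.pi * (1 - Complex.I * σ) / 4)) *
      (Real.pi : ℂ) ^ (-(1 / 2 : ℂ)) * ((x ^ 2 - 1 : ℝ) : ℂ) ^ (-(1 - Complex.I * σ) / 2)
  else 0

/-- `(π(a_t)v_K)(x)` for `0 ≤ t < 1`: the holomorphically extended principal series
operator applied to the normalized `K`-spherical vector. -/
noncomputable def piAtvK (σ t : ℝ) (x : ℝ) : ℂ :=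
  Complex.exp (Complex.I * Real.pi * t * (1 - Complex.I * σ) / 4) *
    (Real.pi : ℂ) ^ (-(1 / 2 : ℂ)) *
    (1 + Complex.exp (Complex.I * Real.pi * t) * (x : ℂ) ^ 2) ^ (-(1 - Complex.I * σ) / 2)

lemma locallyIntegrable_abs_sub_rpow (a : ℝ) {r : ℝ} (hr : -1 < r) :
    LocallyIntegrable (fun x : ℝ => |x - a| ^ r) := by
  have h0 : LocallyIntegrable (fun y : ℝ => |y| ^ r) :=
    locallyIntegrable_of_norm_le_rpow (C := 1) (α := -r) (by simp) (by simp; linarith)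
      (Eventually.of_forall fun y => by simp [abs_of_nonneg, Real.rpow_nonneg])
      (by fun_prop : Measurable fun y : ℝ => |y| ^ r).aestronglyMeasurable
  rw [← map_sub_right_eq_self volume a] at h0
  exact (locallyIntegrable_map_homeomorph (Homeomorph.subRight a)).1 h0

lemma Real.mul_rpow_le_rpow_add_rpow {a b r : ℝ} (ha : 0 ≤ a) (hb : 0 ≤ b) (hr : r ≤ 0)
    (hab : 1 ≤ a ∨ 1 ≤ b) : (a * b) ^ r ≤ a ^ r + b ^ r := by
  have har := Real.rpow_nonneg ha r
  have hbr := Real.rpow_nonneg hb r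
  rw [Real.mul_rpow ha hb]
  rcases hab with ha1 | hb1
  · nlinarith [Real.rpow_le_one_of_one_le_of_nonpos ha1 hr]
  · nlinarith [Real.rpow_le_one_of_one_le_of_nonpos hb1 hr]

lemma abs_one_sub_sq_rpow_le (x : ℝ) {r : ℝ} (hr : r ≤ 0) :
    |1 - x ^ 2| ^ r ≤ |x - 1| ^ r + |x + 1| ^ r := by
  have hfactor : |1 - x ^ 2| = |x - 1| * |x + 1| := by
    rw [← abs_mul, ← abs_neg]; ring_nf
  have hone : 1 ≤ |x - 1| ∨ 1 ≤ |x + 1| := by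
    by_contra! h
    have := abs_sub_abs_le_abs_sub (x + 1) (x - 1)
    linarith [abs_sub_comm (x + 1) (x - 1), le_abs_self (x + 1), neg_abs_le (x - 1),
      abs_lt.1 h.1, abs_lt.1 h.2]
  rw [hfactor]
  exact Real.mul_rpow_le_rpow_add_rpow (abs_nonneg _) (abs_nonneg _) hr hone

lemma Complex.norm_cpow_le_of_le_norm {z s : ℂ} {r : ℝ} (hr : 0 < r) (hz : r ≤ ‖z‖)
    (hs : s.re ≤ 0) : ‖z ^ s‖ ≤ r ^ s.re * Real.exp (Real.pi * |s.im|) := by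
  have harg : -(z.arg * s.im) ≤ Real.pi * |s.im| := by
    calc -(z.arg * s.im) ≤ |z.arg| * |s.im| := by rw [← abs_mul]; exact neg_le_abs _
      _ ≤ Real.pi * |s.im| := by gcongr; exact Complex.abs_arg_le_pi z
  calc ‖z ^ s‖ ≤ ‖z‖ ^ s.re / Real.exp (z.arg * s.im) := Complex.norm_cpow_le z s
    _ = ‖z‖ ^ s.re * Real.exp (-(z.arg * s.im)) := by rw [Real.exp_neg, div_eq_mul_inv]
    _ ≤ r ^ s.re * Real.exp (Real.pi * |s.im|) :=
      mul_le_mul (Real.rpow_le_rpow_of_nonpos hr hz hs) (Real.exp_le_exp.2 harg) (by positivity)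
        (by positivity)

lemma Complex.tendsto_cpow_nhdsWithin_im_nonneg_of_neg {r : ℝ} (hr : 0 < r) (s : ℂ) :
    Tendsto (fun z : ℂ => z ^ s) (𝓝[{z | 0 ≤ z.im}] (-(r : ℂ)))
      (𝓝 (Complex.exp (Real.pi * Complex.I * s) * (r : ℂ) ^ s)) := by
  have hlog := Complex.tendsto_log_nhdsWithin_im_nonneg_of_re_neg_of_im_zero
    (z := -(r : ℂ)) (by simpa using hr) (by simp)
  have hne : ∀ᶠ z in 𝓝[{z | 0 ≤ z.im}] (-(r : ℂ)), z ≠ 0 :=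
    eventually_nhdsWithin_of_eventually_nhds
      (isOpen_ne.mem_nhds (by simpa using hr.ne'))
  have hlim : Complex.exp ((Real.log ‖-(r : ℂ)‖ + Real.pi * Complex.I) * s) =
      Complex.exp (Real.pi * Complex.I * s) * (r : ℂ) ^ s := by
    rw [Complex.cpow_def_of_ne_zero (by simpa using hr.ne'), ← Complex.ofReal_log hr.le,
      ← Complex.exp_add, norm_neg, Complex.norm_real, Real.norm_of_nonneg hr.le]
    ring_nf
  rw [← hlim]
  refine ((Complex.continuous_exp.tendsto _).comp (hlog.mul_const s)).congr' ?_
  filter_upwards [hne] with z hz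
  simp [Complex.cpow_def_of_ne_zero hz]

lemma abs_one_sub_sq_le_norm_one_add_mul_sq (x : ℝ) {w : ℂ} (hw : ‖w‖ = 1) :
    |1 - x ^ 2| ≤ ‖1 + w * (x : ℂ) ^ 2‖ := by
  have h := abs_norm_sub_norm_le (1 : ℂ) (-(w * (x : ℂ) ^ 2))
  rwa [norm_neg, norm_mul, hw, one_mul, norm_pow, Complex.norm_real, Real.norm_eq_abs, sq_abs,
    norm_one, sub_neg_eq_add] at h

lemma norm_piAtvK_le (σ : ℝ) {t x : ℝ} (ht0 : 0 ≤ t) (ht1 : t ≤ 1) (hx : |x| ≠ 1) :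
    ‖piAtvK σ t x‖ ≤ Real.pi ^ (-(1 / 2) : ℝ) * Real.exp (3 * Real.pi * |σ| / 4) *
      |1 - x ^ 2| ^ (-(1 / 2) : ℝ) := by
  have hx2 : 0 < |1 - x ^ 2| := by
    rw [abs_pos, sub_ne_zero, ne_comm, ← sq_abs]
    exact fun h => hx ((pow_eq_one_iff_of_nonneg (abs_nonneg x) two_ne_zero).1 h)
  have hphase : ‖Complex.exp (Complex.I * Real.pi * t * (1 - Complex.I * σ) / 4)‖ ≤
      Real.exp (Real.pi * |σ| / 4) := by
    have hre : (Complex.I * Real.pi * t * (1 - Complex.I * σ) / 4).re =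
        Real.pi * (t * σ) / 4 := by
      simp; ring
    rw [Complex.norm_exp, hre]
    gcongr
    nlinarith [le_abs_self σ, neg_abs_le σ]
  have hpi : ‖(Real.pi : ℂ) ^ (-(1 / 2 : ℂ))‖ = Real.pi ^ (-(1 / 2) : ℝ) := by
    rw [Complex.norm_cpow_eq_rpow_re_of_pos Real.pi_pos]; norm_num
  have hpow :
      ‖(1 + Complex.exp (Complex.I * Real.pi * t) * (x : ℂ) ^ 2) ^ (-(1 - Complex.I * σ) / 2)‖ ≤
        |1 - x ^ 2| ^ (-(1 / 2) : ℝ) * Real.exp (Real.pi * |σ| / 2) := by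
    have h := Complex.norm_cpow_le_of_le_norm (s := -(1 - Complex.I * σ) / 2) hx2
      (abs_one_sub_sq_le_norm_one_add_mul_sq x (w := Complex.exp (Complex.I * Real.pi * t))
        (by rw [Complex.norm_exp]; simp)) (by norm_num)
    convert h using 3 <;> simp [abs_div] <;> ring
  rw [piAtvK, norm_mul, norm_mul, hpi]
  calc _ ≤ Real.exp (Real.pi * |σ| / 4) * Real.pi ^ (-(1 / 2) : ℝ) *
        (|1 - x ^ 2| ^ (-(1 / 2) : ℝ) * Real.exp (Real.pi * |σ| / 2)) := by gcongr
    _ = _ := by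
      rw [show 3 * Real.pi * |σ| / 4 = Real.pi * |σ| / 4 + Real.pi * |σ| / 2 by ring, Real.exp_add]
      ring

lemma tendsto_one_add_exp_mul_sq (x : ℝ) :
    Tendsto (fun t : ℝ => 1 + Complex.exp (Complex.I * Real.pi * t) * (x : ℂ) ^ 2) (𝓝[<] 1)
      (𝓝[{z | 0 ≤ z.im}] ((1 - x ^ 2 : ℝ) : ℂ)) := by
  have hcont : Tendsto (fun t : ℝ => 1 + Complex.exp (Complex.I * Real.pi * t) * (x : ℂ) ^ 2)
      (𝓝 1) (𝓝 ((1 - x ^ 2 : ℝ) : ℂ)) := by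
    refine (show Continuous fun t : ℝ => 1 + Complex.exp (Complex.I * Real.pi * t) * (x : ℂ) ^ 2
      by fun_prop).tendsto' 1 _ ?_
    rw [Complex.ofReal_one, mul_one, mul_comm Complex.I, Complex.exp_pi_mul_I]
    push_cast; ring
  refine tendsto_nhdsWithin_of_tendsto_nhds_of_eventually_within _
    (hcont.mono_left nhdsWithin_le_nhds) ?_
  filter_upwards [Ioo_mem_nhdsLT (show (0 : ℝ) < 1 by norm_num)] with t ht
  have hsin : 0 ≤ Real.sin (Real.pi * t) :=
    Real.sin_nonneg_of_nonneg_of_le_pi (by nlinarith [Real.pi_pos, ht.1])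
      (by nlinarith [Real.pi_pos, ht.2])
  have him : (1 + Complex.exp (Complex.I * Real.pi * t) * (x : ℂ) ^ 2).im =
      Real.sin (Real.pi * t) * x ^ 2 := by
    rw [show Complex.I * Real.pi * t = ((Real.pi * t : ℝ) : ℂ) * Complex.I by push_cast; ring,
      ← Complex.ofReal_pow, Complex.add_im, Complex.one_im, zero_add, Complex.im_mul_ofReal,
      Complex.exp_ofReal_mul_I_im]
  rw [him]
  positivity

lemma tendsto_piAtvK (σ : ℝ) {x : ℝ} (hx : |x| ≠ 1) :
    Tendsto (fun t => piAtvK σ t x) (𝓝[<] 1) (𝓝 (vH σ x)) := by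
  have hprefactor : Tendsto
      (fun t : ℝ => Complex.exp (Complex.I * Real.pi * t * (1 - Complex.I * σ) / 4) *
        (Real.pi : ℂ) ^ (-(1 / 2 : ℂ))) (𝓝[<] 1)
      (𝓝 (Complex.exp (Complex.I * Real.pi * (1 - Complex.I * σ) / 4) *
        (Real.pi : ℂ) ^ (-(1 / 2 : ℂ)))) := by
    refine (Continuous.tendsto' (by fun_prop) 1 _ ?_).mono_left nhdsWithin_le_nhds
    simp
  have hbase := tendsto_one_add_exp_mul_sq x
  rcases hx.lt_or_gt with hlt | hgt
  · have hpos : 0 < 1 - x ^ 2 := by nlinarith [sq_abs x, abs_nonneg x]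
    have hpow := (continuousAt_cpow_const (b := -(1 - Complex.I * σ) / 2)
      (Complex.ofReal_mem_slitPlane.2 hpos)).tendsto.comp (hbase.mono_right nhdsWithin_le_nhds)
    rw [vH, if_pos hlt]
    exact hprefactor.mul hpow
  · have hpos : 0 < x ^ 2 - 1 := by nlinarith [sq_abs x, abs_nonneg x]
    have hneg : ((1 - x ^ 2 : ℝ) : ℂ) = -((x ^ 2 - 1 : ℝ) : ℂ) := by push_cast; ring
    rw [hneg] at hbase
    have hpow := (Complex.tendsto_cpow_nhdsWithin_im_nonneg_of_neg hpos
      (-(1 - Complex.I * σ) / 2)).comp hbase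
    have hlim : vH σ x = Complex.exp (Complex.I * Real.pi * (1 - Complex.I * σ) / 4) *
        (Real.pi : ℂ) ^ (-(1 / 2 : ℂ)) * (Complex.exp (Real.pi * Complex.I *
          (-(1 - Complex.I * σ) / 2)) * ((x ^ 2 - 1 : ℝ) : ℂ) ^ (-(1 - Complex.I * σ) / 2)) := by
      rw [vH, if_neg (by linarith), if_pos hgt,
        show -(Complex.I * Real.pi * (1 - Complex.I * σ) / 4) =
          Complex.I * Real.pi * (1 - Complex.I * σ) / 4 +
            Real.pi * Complex.I * (-(1 - Complex.I * σ) / 2) by ring, Complex.exp_add]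
      ring
    rw [hlim]
    exact hprefactor.mul hpow

lemma norm_vH_le (σ : ℝ) {x : ℝ} (hx : |x| ≠ 1) :
    ‖vH σ x‖ ≤
      Real.pi ^ (-(1 / 2) : ℝ) * Real.exp (3 * Real.pi * |σ| / 4) * |1 - x ^ 2| ^ (-(1 / 2) : ℝ) :=
  le_of_tendsto (tendsto_piAtvK σ hx).norm <| by
    filter_upwards [Ioo_mem_nhdsLT (show (0 : ℝ) < 1 by norm_num)] with t ht
    exact norm_piAtvK_le σ ht.1.le ht.2.le hx

lemma ae_abs_ne_one : ∀ᵐ x : ℝ, |x| ≠ 1 := by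
  filter_upwards [(Set.toFinite {1, -1}).countable.ae_notMem volume] with x hx
  rw [Ne, abs_eq zero_le_one]
  simpa using hx

lemma measurable_piAtvK (σ t : ℝ) : Measurable (piAtvK σ t) := by
  unfold piAtvK; fun_prop

lemma integrable_abs_sub_one_rpow_add_abs_add_one_rpow_mul {E : Type*} [NormedAddCommGroup E]
    {u : ℝ → E} (hu : Continuous u) (hsupp : HasCompactSupport u) :
    Integrable (fun x => (|x - 1| ^ (-(1 / 2) : ℝ) + |x + 1| ^ (-(1 / 2) : ℝ)) * ‖u x‖) := by
  have h1 := locallyIntegrable_abs_sub_rpow 1 (r := -(1 / 2)) (by norm_num)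
  have h2 := locallyIntegrable_abs_sub_rpow (-1) (r := -(1 / 2)) (by norm_num)
  simp only [sub_neg_eq_add] at h2
  exact (h1.add h2).integrable_smul_right_of_hasCompactSupport hu.norm hsupp.norm

/-- for every continuous compactly supported `u : ℝ → ℂ`, the function
`x ↦ v_H(x) · conj(u(x))` is integrable and
`∫ (π(a_t)v_K)(x) conj(u(x)) dx → ∫ v_H(x) conj(u(x)) dx` as `t → 1⁻`. -/
theorem statement0 (σ : ℝ) (u : ℝ → ℂ) (hu : Continuous u) (hsupp : HasCompactSupport u) :
    Integrable (fun x : ℝ => vH σ x * (starRingEnd ℂ) (u x)) ∧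
    Tendsto (fun t : ℝ => ∫ x : ℝ, piAtvK σ t x * (starRingEnd ℂ) (u x))
      (𝓝[<] (1 : ℝ)) (𝓝 (∫ x : ℝ, vH σ x * (starRingEnd ℂ) (u x))) := by
  set C := Real.pi ^ (-(1 / 2) : ℝ) * Real.exp (3 * Real.pi * |σ| / 4)
  set bound : ℝ → ℝ := fun x => C * ((|x - 1| ^ (-(1 / 2) : ℝ) + |x + 1| ^ (-(1 / 2) : ℝ)) * ‖u x‖)
  have hbound_int : Integrable bound :=
    (integrable_abs_sub_one_rpow_add_abs_add_one_rpow_mul hu hsupp).const_mul C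
  have hdominated {x : ℝ} {v : ℂ} (hv : ‖v‖ ≤ C * |1 - x ^ 2| ^ (-(1 / 2) : ℝ)) :
      ‖v * (starRingEnd ℂ) (u x)‖ ≤ bound x := by
    rw [norm_mul, Complex.norm_conj]
    simp only [bound, ← mul_assoc]
    gcongr
    exact hv.trans (by gcongr; exact abs_one_sub_sq_rpow_le x (by norm_num))
  have hlim : ∀ᵐ x : ℝ, Tendsto (fun t => piAtvK σ t x * (starRingEnd ℂ) (u x)) (𝓝[<] 1)
      (𝓝 (vH σ x * (starRingEnd ℂ) (u x))) := by
    filter_upwards [ae_abs_ne_one] with x hx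
    exact (tendsto_piAtvK σ hx).mul_const _
  have hmeas (t : ℝ) : AEStronglyMeasurable (fun x => piAtvK σ t x * (starRingEnd ℂ) (u x)) :=
    ((measurable_piAtvK σ t).mul
      (by fun_prop : Continuous fun x => (starRingEnd ℂ) (u x)).measurable).aestronglyMeasurable
  refine ⟨hbound_int.mono' (aestronglyMeasurable_of_tendsto_ae _ hmeas hlim) ?_,
    tendsto_integral_filter_of_dominated_convergence bound (Eventually.of_forall hmeas) ?_
      hbound_int hlim⟩
  · filter_upwards [ae_abs_ne_one] with x hx
    exact hdominated (norm_vH_le σ hx)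
  · filter_upwards [Ioo_mem_nhdsLT (show (0 : ℝ) < 1 by norm_num)] with t ht
    filter_upwards [ae_abs_ne_one] with x hx
    exact hdominated (norm_piAtvK_le σ ht.1.le ht.2.le hx)
end

section
/- Let f : ℂ → ℂ be holomorphic (complex differentiable) on the open strip S = {z ∈ ℂ : |Im z| < 1}. Assume that for every R > 0, sup_{x ∈ [−R,R]} |f(x + i·t)| tends to 0 as t → 1⁻. Then f is identically zero on S. -/
/-!
The real part of the entire function `q z = -2 - I * z - z ^ 2` is
`φ (x + y I) = y + y ^ 2 - x ^ 2 - 2`. On the rectangle `[-2, 2] × [0, t]` with `t < 1` we have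
`φ ≤ -2` on the bottom and on the vertical sides, and `φ ≤ 0` on the top. The maximum modulus
principle applied to `f * exp (k q)` therefore gives
`‖f w‖ * exp (k φ w) ≤ M * exp (-2 k) + sup_{top edge} ‖f‖`, where `M` bounds `f` near the sides.
Letting `t → 1` kills the last term, and letting `k → ∞` then forces `f w = 0` wherever
`φ w > -2`. This is a nonempty open set, so `f = 0` on the strip by the identity theorem.
-/

open Filter Topology Complex Set

def stripGauge (z : ℂ) : ℂ := -2 - I * z - z ^ 2

theorem stripGauge_re (z : ℂ) : (stripGauge z).re = z.im + z.im ^ 2 - z.re ^ 2 - 2 := by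
  simp only [stripGauge, sub_re, neg_re, mul_re, I_re, I_im, sq]
  norm_num
  ring

theorem norm_mul_exp_re_le_of_forall_mem_frontier {U : Set ℂ} (hU : Bornology.IsBounded U)
    {F q : ℂ → ℂ} (hF : DiffContOnCl ℂ F U) (hq : Differentiable ℂ q) {C : ℝ}
    (hC : ∀ z ∈ frontier U, ‖F z‖ * Real.exp (q z).re ≤ C) {w : ℂ} (hw : w ∈ closure U) :
    ‖F w‖ * Real.exp (q w).re ≤ C := by
  have hnorm : ∀ z, ‖F z * exp (q z)‖ = ‖F z‖ * Real.exp (q z).re := fun z => by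
    rw [norm_mul, norm_exp]
  rw [← hnorm]
  refine Complex.norm_le_of_forall_mem_frontier_norm_le (f := fun z => F z * exp (q z)) hU
    (hF.smul hq.cexp.diffContOnCl) (fun z hz => ?_) hw
  exact (hnorm z).trans_le (hC z hz)

theorem isOpen_abs_im_lt_one : IsOpen {z : ℂ | |z.im| < 1} :=
  isOpen_lt (continuous_abs.comp continuous_im) continuous_const

theorem convex_abs_im_lt_one : Convex ℝ {z : ℂ | |z.im| < 1} := by
  convert (convex_halfSpace_im_gt (-1)).inter (convex_halfSpace_im_lt 1) using 1
  ext z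
  exact abs_lt (a := z.im)

theorem exists_forall_norm_le_of_eventually_norm_le {f : ℂ → ℂ}
    (hf : ContinuousOn f {z : ℂ | |z.im| < 1}) {R C : ℝ}
    (htop : ∀ᶠ t : ℝ in 𝓝[<] (1 : ℝ), ∀ x ∈ Icc (-R) R, ‖f (x + t * I)‖ ≤ C) :
    ∃ M, ∀ z : ℂ, z.re ∈ Icc (-R) R → z.im ∈ Ico 0 1 → ‖f z‖ ≤ M := by
  obtain ⟨u, hu1, hu⟩ := mem_nhdsLT_iff_exists_Ioo_subset.mp htop
  set K := Icc (-R) R ×ℂ Icc 0 (max u 0)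
  have hKstrip : K ⊆ {z : ℂ | |z.im| < 1} := fun z ⟨_, h0, hu'⟩ => by
    have : max u 0 < 1 := max_lt hu1 zero_lt_one
    exact (abs_lt (a := z.im)).mpr ⟨by linarith, by linarith⟩
  obtain ⟨M, hM⟩ :=
    (isCompact_Icc.reProdIm isCompact_Icc).exists_bound_of_continuousOn (hf.mono hKstrip)
  refine ⟨max M C, fun z hre him => ?_⟩
  rcases le_or_gt z.im (max u 0) with hlow | hhigh
  · exact (hM z ⟨hre, him.1, hlow⟩).trans (le_max_left _ _)
  · have := hu ⟨(le_max_left _ _).trans_lt hhigh, him.2⟩ z.re hre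
    rw [re_add_im] at this
    exact this.trans (le_max_right _ _)

theorem mul_exp_mul_le_of_or {a M ε k φ : ℝ} (ha : 0 ≤ a) (hM : 0 ≤ M) (hε : 0 ≤ ε)
    (hk : 0 ≤ k) (h : a ≤ M ∧ φ ≤ -2 ∨ a ≤ ε ∧ φ ≤ 0) :
    a * Real.exp (k * φ) ≤ M * Real.exp (-2 * k) + ε := by
  rcases h with ⟨haM, hφ⟩ | ⟨haε, hφ⟩
  · have : Real.exp (k * φ) ≤ Real.exp (-2 * k) := Real.exp_le_exp.mpr (by nlinarith)
    nlinarith [Real.exp_pos (k * φ)]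
  · have : Real.exp (k * φ) ≤ 1 := Real.exp_le_one_iff.mpr (by nlinarith)
    nlinarith [Real.exp_pos (-2 * k)]

theorem norm_mul_exp_stripGauge_le {f : ℂ → ℂ}
    (hf : DifferentiableOn ℂ f {z : ℂ | |z.im| < 1})
    {M ε t k : ℝ} (hM : ∀ z : ℂ, z.re ∈ Icc (-2) 2 → z.im ∈ Ico 0 1 → ‖f z‖ ≤ M)
    (ht : t ∈ Ioo 0 1) (hε : ∀ x ∈ Icc (-2 : ℝ) 2, ‖f (x + t * I)‖ ≤ ε) (hk : 0 ≤ k)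
    {w : ℂ} (hw : w ∈ Icc (-2 : ℝ) 2 ×ℂ Icc 0 t) :
    ‖f w‖ * Real.exp (k * (stripGauge w).re) ≤ M * Real.exp (-2 * k) + ε := by
  have hM0 : 0 ≤ M := (norm_nonneg _).trans (hM 0 (by simp) (by simp))
  have hε0 : 0 ≤ ε := (norm_nonneg _).trans (hε 0 (by simp))
  have hedge : ∀ z, ‖f z‖ ≤ M ∧ (stripGauge z).re ≤ -2 ∨ ‖f z‖ ≤ ε ∧ (stripGauge z).re ≤ 0 →
      ‖f z‖ * Real.exp (k * (stripGauge z).re) ≤ M * Real.exp (-2 * k) + ε :=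
    fun z => mul_exp_mul_le_of_or (norm_nonneg _) hM0 hε0 hk
  set U := Ioo (-2 : ℝ) 2 ×ℂ Ioo 0 t
  have hclosure : closure U = Icc (-2 : ℝ) 2 ×ℂ Icc 0 t := by
    rw [closure_reProdIm, closure_Ioo (by norm_num), closure_Ioo ht.1.ne]
  have hfrontier : frontier U = Icc (-2 : ℝ) 2 ×ℂ {0, t} ∪ {-2, 2} ×ℂ Icc 0 t := by
    rw [frontier_reProdIm, closure_Ioo (by norm_num), closure_Ioo ht.1.ne, frontier_Ioo ht.1,
      frontier_Ioo (by norm_num)]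
  have hstrip : closure U ⊆ {z : ℂ | |z.im| < 1} := fun z hz => by
    rw [hclosure] at hz
    exact (abs_lt (a := z.im)).mpr ⟨by linarith [hz.2.1], hz.2.2.trans_lt ht.2⟩
  have hq : Differentiable ℂ fun z => (k : ℂ) * stripGauge z := by
    unfold stripGauge; fun_prop
  simp only [← re_ofReal_mul]
  refine norm_mul_exp_re_le_of_forall_mem_frontier
    ((Metric.isBounded_Ioo _ _).reProdIm (Metric.isBounded_Ioo _ _))
    ((hf.mono hstrip).diffContOnCl) hq ?_ (hclosure ▸ hw)
  simp only [re_ofReal_mul]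
  rw [hfrontier]
  rintro z (⟨hre, him | him⟩ | ⟨(hre | hre : z.re = -2 ∨ z.re = 2), him⟩)
  · refine hedge z (.inl ⟨hM z hre (by simp [him]), ?_⟩)
    rw [stripGauge_re, him]; nlinarith
  · refine hedge z (.inr ⟨?_, ?_⟩)
    · have := hε z.re hre
      rwa [← him, re_add_im] at this
    · rw [stripGauge_re, him]; nlinarith [ht.1, ht.2]
  all_goals
    refine hedge z (.inl ⟨hM z (by rw [hre]; norm_num) ⟨him.1, him.2.trans_lt ht.2⟩, ?_⟩)
    rw [stripGauge_re, hre]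
    nlinarith [him.1, him.2, ht.2]

theorem nonpos_of_forall_mul_exp_le {a M φ : ℝ} (hφ : -2 < φ)
    (h : ∀ k ≥ 0, a * Real.exp (k * φ) ≤ M * Real.exp (-2 * k)) : a ≤ 0 := by
  have hdecay : ∀ k ≥ 0, a ≤ M * Real.exp (-(k * (2 + φ))) := fun k hk =>
    calc a = a * Real.exp (k * φ) * Real.exp (-(k * φ)) := by
          rw [mul_assoc, ← Real.exp_add, add_neg_cancel, Real.exp_zero, mul_one]
      _ ≤ M * Real.exp (-2 * k) * Real.exp (-(k * φ)) :=
          mul_le_mul_of_nonneg_right (h k hk) (Real.exp_pos _).le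
      _ = M * Real.exp (-(k * (2 + φ))) := by
          rw [mul_assoc, ← Real.exp_add]; ring_nf
  have hlim : Tendsto (fun k => M * Real.exp (-(k * (2 + φ)))) atTop (𝓝 0) := by
    simpa using (Real.tendsto_exp_neg_atTop_nhds_zero.comp
      (tendsto_id.atTop_mul_const (by linarith : 0 < 2 + φ))).const_mul M
  exact ge_of_tendsto hlim ((eventually_ge_atTop 0).mono hdecay)

theorem eq_zero_of_re_sq_lt_im_add_im_sq {f : ℂ → ℂ}
    (hf : DifferentiableOn ℂ f {z : ℂ | |z.im| < 1})
    (hb : ∀ ε : ℝ, 0 < ε → ∀ᶠ t : ℝ in 𝓝[<] (1 : ℝ),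
      ∀ x ∈ Icc (-2 : ℝ) 2, ‖f (x + t * I)‖ < ε)
    {w : ℂ} (hw₀ : 0 ≤ w.im) (hw₁ : w.im < 1) (hw : w.re ^ 2 < w.im + w.im ^ 2) : f w = 0 := by
  obtain ⟨M, hM⟩ := exists_forall_norm_le_of_eventually_norm_le hf.continuousOn
    ((hb 1 one_pos).mono fun t h x hx => (h x hx).le)
  have hre : w.re ∈ Icc (-2 : ℝ) 2 := by constructor <;> nlinarith
  have hweighted : ∀ k ≥ 0,
      ‖f w‖ * Real.exp (k * (stripGauge w).re) ≤ M * Real.exp (-2 * k) := by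
    intro k hk
    refine le_of_forall_pos_le_add fun ε hε => ?_
    obtain ⟨t, htop, ht⟩ := ((hb ε hε).and (Ioo_mem_nhdsLT (max_lt hw₁ zero_lt_one))).exists
    exact norm_mul_exp_stripGauge_le hf hM ⟨(le_max_right _ _).trans_lt ht.1, ht.2⟩
      (fun x hx => (htop x hx).le) hk ⟨hre, hw₀, (le_max_left _ _).trans ht.1.le⟩
  exact norm_le_zero_iff.mp
    (nonpos_of_forall_mul_exp_le (by rw [stripGauge_re]; linarith) hweighted)

/-- a holomorphic function on the strip `{|Im z| < 1}` whose moduli on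
horizontal segments `[−R,R] + it` tend to `0` uniformly as `t → 1⁻` vanishes identically
on the strip. -/
theorem statement4 (f : ℂ → ℂ)
    (hf : DifferentiableOn ℂ f {z : ℂ | |z.im| < 1})
    (hb : ∀ R : ℝ, 0 < R → ∀ ε : ℝ, 0 < ε → ∀ᶠ t : ℝ in 𝓝[<] (1 : ℝ),
      ∀ x : ℝ, x ∈ Set.Icc (-R) R → ‖f (x + t * Complex.I)‖ < ε) :
    ∀ z ∈ {z : ℂ | |z.im| < 1}, f z = 0 := by
  have hopen : IsOpen {w : ℂ | 0 < w.im ∧ w.im < 1 ∧ w.re ^ 2 < w.im + w.im ^ 2} :=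
    (isOpen_lt continuous_const continuous_im).inter
      ((isOpen_lt continuous_im continuous_const).inter
        (isOpen_lt (continuous_re.pow 2) (continuous_im.add (continuous_im.pow 2))))
  have hvanish : f =ᶠ[𝓝 (I / 2)] 0 := by
    filter_upwards [hopen.mem_nhds (by norm_num)] with w ⟨hw₀, hw₁, hw⟩
    exact eq_zero_of_re_sq_lt_im_add_im_sq hf (hb 2 two_pos) hw₀.le hw₁ hw
  have hanalytic := hf.analyticOnNhd isOpen_abs_im_lt_one
  exact hanalytic.eqOn_zero_of_preconnected_of_eventuallyEq_zero
    convex_abs_im_lt_one.isPreconnected (by norm_num) hvanish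
end

section
/- Let H be a complex Hilbert space and let π : ℝ → (H ≃ₗᵢ H) be a group homomorphism into the group of unitary operators such that t ↦ π(t)v is continuous for every v ∈ H. Let ε > 0 and let f : ℝ → ℂ be integrable, and assume there is a holomorphic function F on the strip {z ∈ ℂ : |Im z| < ε} with F(x) = f(x) for almost every x ∈ ℝ, such that x ↦ F(x + i·b) is integrable for every |b| < ε and sup_{|b| ≤ b₀} ∫_ℝ |F(x + i·b)| dx < ∞ for every 0 < b₀ < ε. Then for every v ∈ H the map ℝ → H given by t ↦ π(t)( ∫_ℝ f(s) • π(s)v ds ) (Bochner integral) is real-analytic. -/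
/-!
Put `Φ w = ∫ F (s + w) • π s v ds`. Translation invariance of Lebesgue measure gives
`π τ (π(f) v) = Φ (-τ)`, so it suffices that `Φ` is holomorphic on the strip. To differentiate
under the integral sign near `w₀` one needs a Lipschitz bound for `w ↦ F (s + w)` that is
integrable in `s`: the Cauchy integral formula on the circle of radius `2r` about `s + w₀` bounds
the Lipschitz constant on `ball w₀ r` by `2 / r` times the circle average of `‖F‖`, and by Fubini
the integral of that average over `s` is an average of `L¹` norms of `F` on horizontal lines.
-/

open MeasureTheory Complex Metric

theorem norm_circleAverage_le_of_norm_le {E : Type*} [NormedAddCommGroup E] [NormedSpace ℝ E]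
    {f : ℂ → E} {g : ℂ → ℝ} {c : ℂ} {R : ℝ}
    (hg : CircleIntegrable g c R) (hfg : ∀ z ∈ sphere c |R|, ‖f z‖ ≤ g z) :
    ‖Real.circleAverage f c R‖ ≤ Real.circleAverage g c R := by
  rw [Real.circleAverage_def, Real.circleAverage_def, norm_smul,
    Real.norm_of_nonneg (by positivity), smul_eq_mul]
  gcongr
  exact intervalIntegral.norm_integral_le_of_norm_le Real.two_pi_pos.le
    (ae_of_all _ fun θ _ => hfg _ (circleMap_mem_sphere' c R θ)) hg

theorem norm_div_sub_sub_div_sub_le {c w₁ w₂ z : ℂ} {r : ℝ} (hr : 0 < r)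
    (hz : z ∈ sphere c (2 * r)) (h₁ : w₁ ∈ ball c r) (h₂ : w₂ ∈ ball c r) :
    ‖(z - c) / (z - w₁) - (z - c) / (z - w₂)‖ ≤ 2 / r * ‖w₁ - w₂‖ := by
  rw [mem_sphere, dist_eq_norm] at hz
  rw [mem_ball, dist_eq_norm] at h₁ h₂
  have hfar : ∀ w : ℂ, ‖w - c‖ < r → r ≤ ‖z - w‖ := fun w hw => by
    have := norm_sub_le_norm_sub_add_norm_sub z w c
    linarith
  have hne : ∀ w : ℂ, ‖w - c‖ < r → z - w ≠ 0 := fun w hw h => by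
    have := hfar w hw
    rw [h, norm_zero] at this
    linarith
  have key : (z - c) / (z - w₁) - (z - c) / (z - w₂)
      = (z - c) * (w₁ - w₂) / ((z - w₁) * (z - w₂)) := by
    field_simp [hne _ h₁, hne _ h₂]
    ring
  rw [key, norm_div, norm_mul, norm_mul, hz, div_le_iff₀ (mul_pos
    (hr.trans_le (hfar _ h₁)) (hr.trans_le (hfar _ h₂)))]
  calc 2 * r * ‖w₁ - w₂‖ = 2 / r * ‖w₁ - w₂‖ * (r * r) := by field_simp
    _ ≤ 2 / r * ‖w₁ - w₂‖ * (‖z - w₁‖ * ‖z - w₂‖) := by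
      gcongr
      exacts [hfar _ h₁, hfar _ h₂]

theorem DifferentiableOn.norm_sub_le_circleAverage_mul_norm_sub {E : Type*}
    [NormedAddCommGroup E] [NormedSpace ℂ E] [CompleteSpace E] {F : ℂ → E} {c w₁ w₂ : ℂ} {r : ℝ}
    (hr : 0 < r) (hF : DifferentiableOn ℂ F (closedBall c (2 * r)))
    (h₁ : w₁ ∈ ball c r) (h₂ : w₂ ∈ ball c r) :
    ‖F w₁ - F w₂‖ ≤ 2 / r * Real.circleAverage (‖F ·‖) c (2 * r) * ‖w₁ - w₂‖ := by
  have hR : |2 * r| = 2 * r := abs_of_pos (by positivity)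
  have hball : ∀ {w}, w ∈ ball c r → w ∈ ball c |2 * r| := fun hw =>
    ball_subset_ball (by rw [hR]; linarith) hw
  have hcl : DiffContOnCl ℂ F (ball c |2 * r|) :=
    (hF.mono (by rw [hR]; exact closure_ball_subset_closedBall)).diffContOnCl
  have hFc : ContinuousOn F (sphere c (2 * r)) := hF.continuousOn.mono sphere_subset_closedBall
  have hint : ∀ {w}, w ∈ ball c r →
      CircleIntegrable (fun z => ((z - c) / (z - w)) • F z) c (2 * r) := fun hw => by
    refine ContinuousOn.circleIntegrable (by positivity) (ContinuousOn.smul ?_ hFc)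
    refine (continuousOn_id.sub continuousOn_const).div (continuousOn_id.sub continuousOn_const)
      fun z hz => sub_ne_zero.2 ?_
    rintro rfl
    rw [mem_sphere] at hz
    rw [mem_ball] at hw
    linarith
  rw [← hcl.circleAverage_smul_div (hball h₁), ← hcl.circleAverage_smul_div (hball h₂),
    ← Real.circleAverage_fun_sub (hint h₁) (hint h₂)]
  calc _ ≤ Real.circleAverage (fun z => (2 / r * ‖w₁ - w₂‖) • ‖F z‖) c (2 * r) := by
        refine norm_circleAverage_le_of_norm_le ?_ fun z hz => ?_
        · refine ContinuousOn.circleIntegrable (by positivity) ?_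
          exact (continuousOn_const (c := 2 / r * ‖w₁ - w₂‖)).smul hFc.norm
        rw [← sub_smul, norm_smul, smul_eq_mul]
        rw [hR] at hz
        gcongr
        exact norm_div_sub_sub_div_sub_le hr hz h₁ h₂
    _ = _ := by rw [Real.circleAverage_fun_smul, smul_eq_mul, mul_right_comm]

def horizontalStrip (ε : ℝ) : Set ℂ := {z | |z.im| < ε}

theorem isOpen_horizontalStrip (ε : ℝ) : IsOpen (horizontalStrip ε) :=
  isOpen_lt (continuous_abs.comp continuous_im) continuous_const

theorem ofReal_add_mem_horizontalStrip {ε : ℝ} {s : ℝ} {w : ℂ} :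
    (s : ℂ) + w ∈ horizontalStrip ε ↔ w ∈ horizontalStrip ε := by
  simp [horizontalStrip]

theorem abs_im_le_of_mem_closedBall {c z : ℂ} {ρ : ℝ} (hz : z ∈ closedBall c ρ) :
    |z.im| ≤ |c.im| + ρ := by
  have h := abs_im_le_norm (z - c)
  rw [sub_im] at h
  have := abs_sub_abs_le_abs_sub z.im c.im
  linarith [mem_closedBall_iff_norm.1 hz]

theorem closedBall_subset_horizontalStrip {c : ℂ} {ρ ε : ℝ} (h : |c.im| + ρ < ε) :
    closedBall c ρ ⊆ horizontalStrip ε := fun _ hz =>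
  (abs_im_le_of_mem_closedBall hz).trans_lt h

theorem ofReal_add_eq_ofReal_add_re_add_im_mul_I (s : ℝ) (w : ℂ) :
    (s : ℂ) + w = ((s + w.re : ℝ) : ℂ) + w.im * I := by
  apply Complex.ext <;> simp

section Translation

variable {E : Type*} [NormedAddCommGroup E]

theorem MeasureTheory.Integrable.comp_ofReal_add {φ : ℂ → E} {w : ℂ}
    (h : Integrable fun x : ℝ => φ (x + w.im * I)) : Integrable fun s : ℝ => φ (s + w) := by
  refine (h.comp_add_right w.re).congr (ae_of_all _ fun s => ?_)
  simp only [ofReal_add_eq_ofReal_add_re_add_im_mul_I s w]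

theorem integral_comp_ofReal_add [NormedSpace ℝ E] (φ : ℂ → E) (w : ℂ) :
    ∫ s : ℝ, φ (s + w) = ∫ x : ℝ, φ (x + w.im * I) := by
  simp_rw [ofReal_add_eq_ofReal_add_re_add_im_mul_I _ w]
  exact integral_add_right_eq_self (fun x : ℝ => φ (x + w.im * I)) w.re

end Translation

section StripConvolution

variable {ε : ℝ} {F : ℂ → ℂ}

theorem integrable_circleAverage_norm_comp_ofReal_add
    (hF : ContinuousOn F (horizontalStrip ε))
    (hFint : ∀ w ∈ horizontalStrip ε, Integrable fun s : ℝ => F (s + w))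
    (hFsup : ∀ b₀, 0 < b₀ → b₀ < ε → ∃ M, ∀ w : ℂ, |w.im| ≤ b₀ → ∫ s : ℝ, ‖F (s + w)‖ ≤ M)
    {w : ℂ} {R : ℝ} (hR : 0 < R) (hw : |w.im| + R < ε) :
    Integrable fun s : ℝ => Real.circleAverage (‖F ·‖) (s + w) R := by
  have him : ∀ θ, |(circleMap w R θ).im| ≤ |w.im| + R := fun θ =>
    abs_im_le_of_mem_closedBall (circleMap_mem_closedBall w hR.le θ)
  have hmem : ∀ θ, circleMap w R θ ∈ horizontalStrip ε := fun θ => (him θ).trans_lt hw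
  set A : ℝ × ℝ → ℝ := fun p => ‖F (p.1 + circleMap w R p.2)‖
  have hA : Continuous A := by
    have hc : Continuous fun p : ℝ × ℝ => (p.1 : ℂ) + circleMap w R p.2 := by
      unfold circleMap; fun_prop
    exact (hF.comp_continuous hc fun p => ofReal_add_mem_horizontalStrip.2 (hmem p.2)).norm
  have hAint : Integrable A (volume.prod (volume.restrict (Set.Ioc 0 (2 * Real.pi)))) := by
    refine (integrable_prod_iff' hA.aestronglyMeasurable).2
      ⟨ae_of_all _ fun θ => (hFint _ (hmem θ)).norm, ?_⟩
    obtain ⟨M, hM⟩ := hFsup (|w.im| + R) (by positivity) hw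
    refine Integrable.of_bound hA.norm.stronglyMeasurable.integral_prod_left'.aestronglyMeasurable
      M (ae_of_all _ fun θ => ?_)
    rw [Real.norm_of_nonneg (integral_nonneg fun _ => norm_nonneg _)]
    simpa [A] using hM _ (him θ)
  refine (hAint.integral_prod_left.const_mul (2 * Real.pi)⁻¹).congr (ae_of_all _ fun s => ?_)
  simp [A, Real.circleAverage_def, intervalIntegral.integral_of_le Real.two_pi_pos.le, circleMap,
    add_assoc]

theorem norm_comp_ofReal_add_sub_le (hF : DifferentiableOn ℂ F (horizontalStrip ε))
    {w₀ : ℂ} {r : ℝ} (hr : 0 < r) (hw₀ : |w₀.im| + 2 * r < ε) (s : ℝ) {w₁ w₂ : ℂ}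
    (h₁ : w₁ ∈ ball w₀ r) (h₂ : w₂ ∈ ball w₀ r) :
    ‖F (s + w₁) - F (s + w₂)‖
      ≤ 2 / r * Real.circleAverage (‖F ·‖) (s + w₀) (2 * r) * ‖w₁ - w₂‖ := by
  have hball : ∀ {w}, w ∈ ball w₀ r → (s : ℂ) + w ∈ ball ((s : ℂ) + w₀) r := fun hw => by
    rwa [mem_ball, dist_add_left]
  have hsub := closedBall_subset_horizontalStrip (c := (s : ℂ) + w₀) (ρ := 2 * r) (by simpa)
  simpa using (hF.mono hsub).norm_sub_le_circleAverage_mul_norm_sub hr (hball h₁) (hball h₂)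

variable {E : Type*} [NormedAddCommGroup E] [NormedSpace ℂ E]

theorem differentiableOn_integral_comp_ofReal_add_smul
    (hF : DifferentiableOn ℂ F (horizontalStrip ε))
    (hFint : ∀ w ∈ horizontalStrip ε, Integrable fun s : ℝ => F (s + w))
    (hFsup : ∀ b₀, 0 < b₀ → b₀ < ε → ∃ M, ∀ w : ℂ, |w.im| ≤ b₀ → ∫ s : ℝ, ‖F (s + w)‖ ≤ M)
    {g : ℝ → E} {C : ℝ} (hg : AEStronglyMeasurable g) (hgC : ∀ s, ‖g s‖ ≤ C) :
    DifferentiableOn ℂ (fun w => ∫ s : ℝ, F (s + w) • g s) (horizontalStrip ε) := by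
  intro w₀ hw₀
  have hw₀' : |w₀.im| < ε := hw₀
  obtain ⟨r, hr, hstrip⟩ : ∃ r : ℝ, 0 < r ∧ |w₀.im| + 2 * r < ε :=
    ⟨(ε - |w₀.im|) / 4, by linarith, by linarith⟩
  have hopen := isOpen_horizontalStrip ε
  have hmeas : ∀ w ∈ horizontalStrip ε,
      AEStronglyMeasurable fun s : ℝ => F (s + w) • g s := fun w hw =>
    ((hF.continuousOn.comp_continuous (by fun_prop) fun s =>
      ofReal_add_mem_horizontalStrip.2 hw).aestronglyMeasurable).smul hg
  have hderiv : AEStronglyMeasurable fun s : ℝ => deriv F (s + w₀) • g s :=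
    (((hF.analyticOnNhd hopen).deriv.continuousOn.comp_continuous (by fun_prop) fun s =>
      ofReal_add_mem_horizontalStrip.2 hw₀).aestronglyMeasurable).smul hg
  set bound := fun s : ℝ => C * (2 / r * Real.circleAverage (‖F ·‖) (s + w₀) (2 * r))
  have hbound : Integrable bound :=
    ((integrable_circleAverage_norm_comp_ofReal_add hF.continuousOn hFint hFsup (by positivity)
      hstrip).const_mul _).const_mul _
  have havg : ∀ s : ℝ, 0 ≤ Real.circleAverage (‖F ·‖) (s + w₀) (2 * r) := fun s =>
    Real.circleAverage_nonneg_of_nonneg fun _ _ => norm_nonneg _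
  have hlip : ∀ s : ℝ, LipschitzOnWith (Real.nnabs (bound s))
      (fun w => F (s + w) • g s) (ball w₀ r) := fun s =>
    LipschitzOnWith.of_dist_le_mul fun w₁ h₁ w₂ h₂ => by
      rw [dist_eq_norm, dist_eq_norm, ← sub_smul, norm_smul, Real.coe_nnabs]
      calc _ ≤ 2 / r * Real.circleAverage (‖F ·‖) (s + w₀) (2 * r) * ‖w₁ - w₂‖ * C :=
            mul_le_mul (norm_comp_ofReal_add_sub_le hF hr hstrip s h₁ h₂) (hgC s)
              (norm_nonneg _) (by have := havg s; positivity)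
        _ = bound s * ‖w₁ - w₂‖ := by ring
        _ ≤ |bound s| * ‖w₁ - w₂‖ := by gcongr; exact le_abs_self _
  have hhasDeriv : ∀ s : ℝ,
      HasDerivAt (fun w => F (s + w) • g s) (deriv F (s + w₀) • g s) w₀ := fun s =>
    (((hF.differentiableAt (hopen.mem_nhds (ofReal_add_mem_horizontalStrip.2 hw₀))).hasDerivAt
      ).comp_const_add _ _).smul_const _
  have hmain := hasDerivAt_integral_of_dominated_loc_of_lip (ball_mem_nhds w₀ hr)
    (Filter.eventually_of_mem (hopen.mem_nhds hw₀) hmeas)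
    ((hFint w₀ hw₀).smul_bdd C hg (ae_of_all _ hgC))
    hderiv (ae_of_all _ hlip) hbound (ae_of_all _ hhasDeriv)
  exact hmain.2.differentiableAt.differentiableWithinAt

end StripConvolution

theorem apply_integral_smul_eq_integral_comp_sub_smul {H : Type*} [NormedAddCommGroup H]
    [NormedSpace ℂ H] [CompleteSpace H] {π : ℝ → (H ≃ₗᵢ[ℂ] H)}
    (hπadd : ∀ s t : ℝ, ∀ v : H, π (s + t) v = π s (π t v)) (f : ℝ → ℂ) (v : H) (τ : ℝ) :
    π τ (∫ s : ℝ, f s • π s v) = ∫ s : ℝ, f (s - τ) • π s v := by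
  rw [← integral_add_left_eq_self (fun s => f (s - τ) • π s v) τ]
  simp_rw [add_sub_cancel_left, hπadd, ← map_smul]
  exact ((π τ).toLinearIsometry.integral_comp_comm _).symm

theorem statement14_general {H : Type*} [NormedAddCommGroup H] [InnerProductSpace ℂ H]
    [CompleteSpace H]
    (π : ℝ → (H ≃ₗᵢ[ℂ] H))
    (hπadd : ∀ s t : ℝ, ∀ v : H, π (s + t) v = π s (π t v))
    (hπcont : ∀ v : H, Continuous fun t : ℝ => π t v)
    (ε : ℝ) (hε : 0 < ε) (f : ℝ → ℂ)
    (F : ℂ → ℂ)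
    (hF : DifferentiableOn ℂ F {z : ℂ | |z.im| < ε})
    (hFf : ∀ᵐ x : ℝ ∂volume, F (x : ℂ) = f x)
    (hFint : ∀ b : ℝ, |b| < ε → Integrable fun x : ℝ => F (x + b * Complex.I))
    (hFsup : ∀ b₀ : ℝ, 0 < b₀ → b₀ < ε → ∃ M : ℝ, ∀ b : ℝ, |b| ≤ b₀ →
      (∫ x : ℝ, ‖F (x + b * Complex.I)‖) ≤ M) :
    ∀ v : H, ∀ t : ℝ,
      AnalyticAt ℝ (fun t : ℝ => π t (∫ s : ℝ, f s • π s v)) t := by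
  intro v t
  have hΦ := differentiableOn_integral_comp_ofReal_add_smul hF
    (fun w hw => (hFint w.im hw).comp_ofReal_add)
    (fun b₀ h₀ h₁ => (hFsup b₀ h₀ h₁).imp fun M hM w hw =>
      (integral_comp_ofReal_add (‖F ·‖) w).trans_le (hM _ hw))
    (hπcont v).aestronglyMeasurable (fun s => ((π s).norm_map v).le)
  have hana := hΦ.analyticAt (z := -(t : ℂ))
    ((isOpen_horizontalStrip ε).mem_nhds (by simpa [horizontalStrip]))
  refine (hana.restrictScalars.comp_of_eq ((-ofRealCLM).analyticAt t) (by simp)).congr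
    (Filter.Eventually.of_forall fun τ => ?_)
  simp only [Function.comp_apply, neg_apply, ofRealCLM_apply,
    apply_integral_smul_eq_integral_comp_sub_smul hπadd]
  refine integral_congr_ae ?_
  filter_upwards [(measurePreserving_sub_right volume τ).quasiMeasurePreserving.ae hFf] with s hs
  rw [← sub_eq_add_neg, ← hs, ofReal_sub, sub_eq_add_neg]

/-- if `π` is a strongly continuous unitary representation of `ℝ` on a
complex Hilbert space `H` and `f ∈ L¹(ℝ)` extends holomorphically to the strip
`{|Im z| < ε}` with uniformly bounded `L¹`-norms on horizontal lines, then for every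
`v ∈ H` the vector `π(f)v = ∫ f(s)·π(s)v ds` is an analytic vector: the orbit map
`t ↦ π(t)(π(f)v)` is real-analytic. -/
theorem statement14 {H : Type*} [NormedAddCommGroup H] [InnerProductSpace ℂ H]
    [CompleteSpace H]
    (π : ℝ → (H ≃ₗᵢ[ℂ] H))
    (hπ0 : ∀ v : H, π 0 v = v)
    (hπadd : ∀ s t : ℝ, ∀ v : H, π (s + t) v = π s (π t v))
    (hπcont : ∀ v : H, Continuous fun t : ℝ => π t v)
    (ε : ℝ) (hε : 0 < ε) (f : ℝ → ℂ) (hf : Integrable f (volume : Measure ℝ))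
    (F : ℂ → ℂ)
    (hF : DifferentiableOn ℂ F {z : ℂ | |z.im| < ε})
    (hFf : ∀ᵐ x : ℝ ∂volume, F (x : ℂ) = f x)
    (hFint : ∀ b : ℝ, |b| < ε → Integrable fun x : ℝ => F (x + b * Complex.I))
    (hFsup : ∀ b₀ : ℝ, 0 < b₀ → b₀ < ε → ∃ M : ℝ, ∀ b : ℝ, |b| ≤ b₀ →
      (∫ x : ℝ, ‖F (x + b * Complex.I)‖) ≤ M) :
    ∀ v : H, ∀ t : ℝ,
      AnalyticAt ℝ (fun t : ℝ => π t (∫ s : ℝ, f s • π s v)) t :=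
  statement14_general π hπadd hπcont ε hε f F hF hFf hFint hFsup
end
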